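/- arXiv:1407.3099 — 2 statements merged into one kernel-verified Lean document; each statement's English description precedes it below -/
import Mathlib

section
/- For k = 1, the function z ↦ A(1/2; z) is differentiable at z = 0 and its derivative satisfies A'(1/2; 0) = A(1/2; 0) · (2 log q) · Σ_{P monic irreducible} deg(P) / ( |P|(|P|+1) − 1 ), where A(1/2;0) = ∏_{P monic irreducible} (1 − 1/((|P|+1)|P|)) and the series over P converges absolutely. -/
/-- The norm `|P| = q^{deg P}` of a polynomial over `F_q`, as a real number. -/
noncomputable def pnorm {Fq : Type*} [Field Fq] [Fintype Fq] (P : Polynomial Fq) : ℝ :=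
  (Fintype.card Fq : ℝ) ^ P.natDegree

/-- The Euler product `A(1/2; z)` (case `k = 1`), a function of `z ∈ ℂ`:
`∏_P (1 − |P|^{-(1+2z)})·[(1/2)((1−|P|^{-(1/2+z)})⁻¹+(1+|P|^{-(1/2+z)})⁻¹)+1/|P|]·(1+1/|P|)⁻¹`,
with `|P|^w = exp(w·(deg P)·log q)`. -/
noncomputable def eulerA1 (Fq : Type*) [Field Fq] [Fintype Fq] (z : ℂ) : ℂ :=
  ∏' P : {P : Polynomial Fq // P.Monic ∧ Irreducible P},
    (1 - Complex.exp (-(1 + 2 * z) * ((P.1.natDegree : ℂ) * Real.log (Fintype.card Fq)))) *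
      ((1 / 2) *
        ((1 - Complex.exp (-(1 / 2 + z) *
            ((P.1.natDegree : ℂ) * Real.log (Fintype.card Fq))))⁻¹ +
         (1 + Complex.exp (-(1 / 2 + z) *
            ((P.1.natDegree : ℂ) * Real.log (Fintype.card Fq))))⁻¹) +
        ((pnorm P.1 : ℝ) : ℂ)⁻¹) *
      (1 + ((pnorm P.1 : ℝ) : ℂ)⁻¹)⁻¹

/-!
With `e = |P|^{-(1/2+z)}` we have `(1/2)((1-e)⁻¹ + (1+e)⁻¹) = (1-e²)⁻¹`, so the local factor of
`A(1/2; z)` collapses to `1 - |P|^{-(1+2z)} / (|P|+1)`. On `Re z > -1/4` this is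
`1 + O(|P|^{-3/2})`, and there are `q^n` monic polynomials of degree `n`, so the product converges
locally uniformly: it is holomorphic there and its logarithmic derivative is the sum of those of
its factors. At `z = 0` the factor is `1 - 1/((|P|+1)|P|)`, with logarithmic derivative
`2 deg P log q / (|P|(|P|+1) - 1)`.
-/

open Complex Polynomial

theorem Polynomial.injective_coeff_of_monic_of_natDegree_eq {R : Type*} [Semiring R] (n : ℕ) :
    Function.Injective fun P : {P : R[X] // P.Monic ∧ P.natDegree = n} ↦
      fun i : Fin n ↦ P.1.coeff i := by
  rintro ⟨P, hPm, hPn⟩ ⟨Q, hQm, hQn⟩ h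
  refine Subtype.ext (Polynomial.ext fun i ↦ ?_)
  rcases lt_trichotomy i n with hi | rfl | hi
  · exact congrFun h ⟨i, hi⟩
  · change P.coeff i = Q.coeff i
    rw [← hPn, hPm.coeff_natDegree, hPn, ← hQn, hQm.coeff_natDegree]
  · rw [coeff_eq_zero_of_natDegree_lt (hPn ▸ hi), coeff_eq_zero_of_natDegree_lt (hQn ▸ hi)]

section Summation

variable {Fq : Type*} [Field Fq] [Fintype Fq]

instance Polynomial.finite_monic_natDegree_eq (n : ℕ) :
    Finite {P : Fq[X] // P.Monic ∧ P.natDegree = n} :=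
  .of_injective _ (injective_coeff_of_monic_of_natDegree_eq n)

theorem summable_comp_natDegree_of_monic {p : Fq[X] → Prop} (hs : ∀ P, p P → P.Monic)
    {c : ℕ → ℝ} (hc : ∀ n, 0 ≤ c n) (h : Summable fun n ↦ (Fintype.card Fq : ℝ) ^ n * c n) :
    Summable fun P : {P // p P} ↦ c P.1.natDegree := by
  have hsigma : Summable fun x : Σ n, {P : Fq[X] // P.Monic ∧ P.natDegree = n} ↦ c x.1 := by
    refine (summable_sigma_of_nonneg fun x ↦ hc x.1).2 ⟨fun n ↦ .of_finite, ?_⟩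
    refine h.of_nonneg_of_le (fun n ↦ tsum_nonneg fun _ ↦ hc n) fun n ↦ ?_
    dsimp only
    rw [tsum_const, nsmul_eq_mul]
    gcongr
    · exact hc n
    calc (Nat.card {P : Fq[X] // P.Monic ∧ P.natDegree = n} : ℝ)
        ≤ Nat.card (Fin n → Fq) := by
          exact_mod_cast
            Nat.card_le_card_of_injective _ (injective_coeff_of_monic_of_natDegree_eq n)
      _ = (Fintype.card Fq : ℝ) ^ n := by simp [Nat.card_eq_fintype_card]
  refine hsigma.comp_injective
    (i := fun P : {P // p P} ↦ ⟨P.1.natDegree, P.1, hs P.1 P.2, rfl⟩) ?_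
  intro P Q h
  exact Subtype.ext (congrArg (fun x ↦ x.2.1) h)

end Summation

theorem hasDerivAt_tprod_one_add {ι : Type*} {U : Set ℂ} (hU : IsOpen U) {f : ι → ℂ → ℂ}
    {u : ι → ℝ} (hu : Summable u) (hfu : ∀ i, ∀ z ∈ U, ‖f i z‖ ≤ u i)
    (hf : ∀ i, DifferentiableOn ℂ (f i) U) (hne : ∀ i, ∀ z ∈ U, 1 + f i z ≠ 0) {z : ℂ}
    (hz : z ∈ U) {s : ℂ} (hs : HasSum (fun i ↦ logDeriv (fun w ↦ 1 + f i w) z) s) :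
    HasDerivAt (fun w ↦ ∏' i, (1 + f i w)) ((∏' i, (1 + f i z)) * s) z := by
  have hmult : MultipliableLocallyUniformlyOn (fun i w ↦ 1 + f i w) U :=
    hu.multipliableLocallyUniformlyOn_one_add hU (.of_forall hfu) fun i ↦ (hf i).continuousOn
  have hdiff : DifferentiableOn ℂ (fun w ↦ ∏' i, (1 + f i w)) U := by
    refine hmult.hasProdLocallyUniformlyOn.differentiableOn (.of_forall fun t ↦ ?_) hU
    exact .fun_finsetProd fun i _ ↦ (hf i).const_add 1
  have hnez : ∏' i, (1 + f i z) ≠ 0 :=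
    tprod_one_add_ne_zero_of_summable (hne · z hz)
      (hu.of_nonneg_of_le (fun _ ↦ norm_nonneg _) (hfu · z hz))
  have hlog := logDeriv_tprod_eq_tsum hU hz (hne · z hz) (fun i ↦ (hf i).const_add 1)
    hs.summable hmult hnez
  rw [hs.tsum_eq, logDeriv_apply, div_eq_iff hnez] at hlog
  rw [mul_comm, ← hlog]
  exact (hdiff.differentiableAt (hU.mem_nhds hz)).hasDerivAt

theorem one_sub_sq_mul_mean_inv_add_inv_eq {K : Type*} [Field K] [CharZero K] {e N : K} (he : e ≠ 1)
    (he' : e ≠ -1) (hN : N ≠ 0) (hN' : N + 1 ≠ 0) :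
    (1 - e ^ 2) * ((1 / 2) * ((1 - e)⁻¹ + (1 + e)⁻¹) + N⁻¹) * (1 + N⁻¹)⁻¹ =
      1 - e ^ 2 / (N + 1) := by
  have h1 : 1 - e ≠ 0 := sub_ne_zero.mpr (Ne.symm he)
  have h2 : 1 + e ≠ 0 := fun h ↦ he' (by linear_combination h)
  field_simp
  ring

section EulerFactor

variable {Fq : Type*} [Field Fq] [Fintype Fq]

/-- `|P|^{-w}`, written exactly as in `eulerA1`. -/
noncomputable def pnormCpowNeg (P : Fq[X]) (w : ℂ) : ℂ :=
  cexp (-w * ((P.natDegree : ℂ) * Real.log (Fintype.card Fq)))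

variable (Fq) in
theorem one_lt_card_real : (1 : ℝ) < Fintype.card Fq := mod_cast Fintype.one_lt_card

theorem one_le_pnorm (P : Fq[X]) : 1 ≤ pnorm P := one_le_pow₀ (one_lt_card_real Fq).le

theorem one_lt_pnorm {P : Fq[X]} (hP : P.natDegree ≠ 0) : 1 < pnorm P :=
  one_lt_pow₀ (one_lt_card_real Fq) hP

theorem norm_pnormCpowNeg (P : Fq[X]) (w : ℂ) : ‖pnormCpowNeg P w‖ = pnorm P ^ (-w.re) := by
  rw [pnormCpowNeg, norm_exp, Real.rpow_def_of_pos (by linarith [one_le_pnorm P]), pnorm,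
    Real.log_pow]
  have : -w * ((P.natDegree : ℂ) * Real.log (Fintype.card Fq))
      = ((P.natDegree * Real.log (Fintype.card Fq) : ℝ) : ℂ) * -w := by
    push_cast; ring
  rw [this, re_ofReal_mul, neg_re]

theorem norm_pnormCpowNeg_le (P : Fq[X]) {w : ℂ} {σ : ℝ} (hσ : σ ≤ w.re) :
    ‖pnormCpowNeg P w‖ ≤ pnorm P ^ (-σ) := by
  rw [norm_pnormCpowNeg]
  exact Real.rpow_le_rpow_of_exponent_le (one_le_pnorm P) (by linarith)

theorem pnormCpowNeg_one (P : Fq[X]) : pnormCpowNeg P 1 = ((pnorm P)⁻¹ : ℝ) := by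
  rw [pnormCpowNeg, pnorm, ← Real.exp_log (zero_lt_one.trans (one_lt_card_real Fq)),
    ← Real.exp_nat_mul, ← Real.exp_neg, ofReal_exp, Real.log_exp]
  push_cast
  ring_nf

theorem pnormCpowNeg_sq (P : Fq[X]) (z : ℂ) :
    pnormCpowNeg P (1 / 2 + z) ^ 2 = pnormCpowNeg P (1 + 2 * z) := by
  rw [pnormCpowNeg, pnormCpowNeg, sq, ← exp_add]
  ring_nf

theorem hasDerivAt_pnormCpowNeg (P : Fq[X]) (w : ℂ) :
    HasDerivAt (pnormCpowNeg P)
      (-((P.natDegree : ℂ) * Real.log (Fintype.card Fq)) * pnormCpowNeg P w) w :=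
  ((hasDerivAt_neg w).mul_const ((P.natDegree : ℂ) * Real.log (Fintype.card Fq))).cexp
    |>.congr_deriv (by rw [pnormCpowNeg]; ring)

noncomputable def eulerA1FactorSubOne (P : Fq[X]) (z : ℂ) : ℂ :=
  -(pnormCpowNeg P (1 + 2 * z) / ((pnorm P : ℂ) + 1))

theorem eulerA1_factor_eq {P : Fq[X]} (hP : P.natDegree ≠ 0) {z : ℂ} (hz : -(1 / 2) < z.re) :
    (1 - Complex.exp (-(1 + 2 * z) * ((P.natDegree : ℂ) * Real.log (Fintype.card Fq)))) *
      ((1 / 2) *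
        ((1 - Complex.exp (-(1 / 2 + z) *
            ((P.natDegree : ℂ) * Real.log (Fintype.card Fq))))⁻¹ +
         (1 + Complex.exp (-(1 / 2 + z) *
            ((P.natDegree : ℂ) * Real.log (Fintype.card Fq))))⁻¹) +
        ((pnorm P : ℝ) : ℂ)⁻¹) *
      (1 + ((pnorm P : ℝ) : ℂ)⁻¹)⁻¹ = 1 + eulerA1FactorSubOne P z := by
  have hN := one_le_pnorm P
  have he : ‖pnormCpowNeg P (1 / 2 + z)‖ < 1 := by
    rw [norm_pnormCpowNeg]
    exact Real.rpow_lt_one_of_one_lt_of_neg (one_lt_pnorm hP) (by simp; linarith)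
  change (1 - pnormCpowNeg P (1 + 2 * z)) * ((1 / 2) * ((1 - pnormCpowNeg P (1 / 2 + z))⁻¹ +
    (1 + pnormCpowNeg P (1 / 2 + z))⁻¹) + _) * _ = _
  rw [← pnormCpowNeg_sq, one_sub_sq_mul_mean_inv_add_inv_eq, eulerA1FactorSubOne, pnormCpowNeg_sq,
    sub_eq_add_neg]
  · rintro h; rw [h] at he; norm_num at he
  · rintro h; rw [h] at he; norm_num at he
  · exact_mod_cast (by positivity : pnorm P ≠ 0)
  · exact_mod_cast (by positivity : pnorm P + 1 ≠ 0)

theorem norm_eulerA1FactorSubOne (P : Fq[X]) (z : ℂ) :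
    ‖eulerA1FactorSubOne P z‖ = ‖pnormCpowNeg P (1 + 2 * z)‖ / (pnorm P + 1) := by
  rw [eulerA1FactorSubOne, norm_neg, norm_div]
  congr
  exact_mod_cast Real.norm_of_nonneg (by linarith [one_le_pnorm P])

theorem norm_eulerA1FactorSubOne_le (P : Fq[X]) {z : ℂ} (hz : -(1 / 4) ≤ z.re) :
    ‖eulerA1FactorSubOne P z‖ ≤ pnorm P ^ (-(1 / 2) : ℝ) / pnorm P := by
  have hN := one_le_pnorm P
  rw [norm_eulerA1FactorSubOne]
  gcongr
  · exact norm_pnormCpowNeg_le P (by simp; linarith)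
  · linarith

theorem one_add_eulerA1FactorSubOne_ne_zero (P : Fq[X]) {z : ℂ} (hz : -(1 / 2) ≤ z.re) :
    1 + eulerA1FactorSubOne P z ≠ 0 := by
  have hN := one_le_pnorm P
  have hlt : ‖eulerA1FactorSubOne P z‖ < 1 := by
    rw [norm_eulerA1FactorSubOne, div_lt_one (by linarith)]
    have := norm_pnormCpowNeg_le P (w := 1 + 2 * z) (σ := 0) (by simp; linarith)
    rw [neg_zero, Real.rpow_zero] at this
    linarith
  intro h
  rw [← neg_eq_of_add_eq_zero_right h, norm_neg, norm_one] at hlt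
  exact lt_irrefl _ hlt

theorem hasDerivAt_eulerA1FactorSubOne (P : Fq[X]) (z : ℂ) :
    HasDerivAt (eulerA1FactorSubOne P)
      (2 * ((P.natDegree : ℂ) * Real.log (Fintype.card Fq)) * pnormCpowNeg P (1 + 2 * z) /
        ((pnorm P : ℂ) + 1)) z := by
  have := ((hasDerivAt_pnormCpowNeg P (1 + 2 * z)).comp z
    (((hasDerivAt_id z).const_mul 2).const_add 1)).div_const ((pnorm P : ℂ) + 1) |>.neg
  exact this.congr_deriv (by ring)

theorem differentiable_eulerA1FactorSubOne (P : Fq[X]) :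
    Differentiable ℂ (eulerA1FactorSubOne P) :=
  fun z ↦ (hasDerivAt_eulerA1FactorSubOne P z).differentiableAt

theorem one_add_eulerA1FactorSubOne_zero (P : Fq[X]) :
    1 + eulerA1FactorSubOne P 0 = ((1 - ((pnorm P + 1) * pnorm P)⁻¹ : ℝ) : ℂ) := by
  rw [eulerA1FactorSubOne, mul_zero, add_zero, pnormCpowNeg_one, mul_inv]
  push_cast
  ring

theorem logDeriv_one_add_eulerA1FactorSubOne_zero (P : Fq[X]) :
    logDeriv (fun w ↦ 1 + eulerA1FactorSubOne P w) 0 =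
      ((2 * Real.log (Fintype.card Fq) *
        (P.natDegree / (pnorm P * (pnorm P + 1) - 1)) : ℝ) : ℂ) := by
  have hN := one_le_pnorm P
  have hD : pnorm P * (pnorm P + 1) - 1 ≠ 0 := by nlinarith
  rw [logDeriv_apply, ((hasDerivAt_eulerA1FactorSubOne P 0).const_add 1).deriv,
    one_add_eulerA1FactorSubOne_zero, mul_zero, add_zero, pnormCpowNeg_one]
  have hN0 : (pnorm P : ℂ) ≠ 0 := mod_cast (by positivity)
  have hN1 : (pnorm P : ℂ) + 1 ≠ 0 := mod_cast (by positivity : pnorm P + 1 ≠ 0)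
  have hD' : (pnorm P : ℂ) * (pnorm P + 1) - 1 ≠ 0 := mod_cast hD
  push_cast
  field_simp

end EulerFactor

section MonicSums

variable {Fq : Type*} [Field Fq] [Fintype Fq] {p : Fq[X] → Prop}

theorem summable_rpow_neg_half_div_pnorm (hs : ∀ P, p P → P.Monic) :
    Summable fun P : {P // p P} ↦ pnorm P.1 ^ (-(1 / 2) : ℝ) / pnorm P.1 := by
  have hq := one_lt_card_real Fq
  refine summable_comp_natDegree_of_monic hs
    (c := fun n ↦ ((Fintype.card Fq : ℝ) ^ n) ^ (-(1 / 2) : ℝ) / (Fintype.card Fq : ℝ) ^ n)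
    (fun n ↦ by positivity) ?_
  refine (summable_geometric_of_lt_one (by positivity)
    (Real.rpow_lt_one_of_one_lt_of_neg hq (by norm_num : (-(1 / 2) : ℝ) < 0))).congr fun n ↦ ?_
  rw [Real.rpow_pow_comm (by positivity), mul_div_cancel₀ _ (by positivity)]

theorem summable_natDegree_div_pnorm (hs : ∀ P, p P → P.Monic) :
    Summable fun P : {P // p P} ↦ (P.1.natDegree : ℝ) / (pnorm P.1 * (pnorm P.1 + 1) - 1) := by
  have hq := one_lt_card_real Fq
  have hQ (n : ℕ) : 1 ≤ (Fintype.card Fq : ℝ) ^ n := one_le_pow₀ hq.le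
  refine summable_comp_natDegree_of_monic hs
    (c := fun n ↦ n / ((Fintype.card Fq : ℝ) ^ n * ((Fintype.card Fq : ℝ) ^ n + 1) - 1))
    (fun n ↦ div_nonneg n.cast_nonneg (by nlinarith [hQ n])) ?_
  have hgeom : Summable fun n : ℕ ↦ (n : ℝ) ^ 1 * ((Fintype.card Fq : ℝ)⁻¹) ^ n :=
    summable_pow_mul_geometric_of_norm_lt_one 1 (by
      rw [Real.norm_of_nonneg (by positivity)]; exact inv_lt_one_of_one_lt₀ hq)
  refine hgeom.of_nonneg_of_le (fun n ↦ ?_) fun n ↦ ?_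
  · exact mul_nonneg (by positivity) (div_nonneg n.cast_nonneg (by nlinarith [hQ n]))
  · have h1 := hQ n
    set Q := (Fintype.card Fq : ℝ) ^ n
    rw [pow_one, inv_pow, ← div_eq_mul_inv, mul_div_assoc',
      div_le_div_iff₀ (by nlinarith) (by linarith)]
    nlinarith [n.cast_nonneg (α := ℝ)]

theorem multipliable_one_sub_inv_pnorm (hs : ∀ P, p P → P.Monic) :
    Multipliable fun P : {P // p P} ↦ 1 - ((pnorm P.1 + 1) * pnorm P.1)⁻¹ := by
  have hle (P : {P // p P}) :
      ((pnorm P.1 + 1) * pnorm P.1)⁻¹ ≤ pnorm P.1 ^ (-(1 / 2) : ℝ) / pnorm P.1 := by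
    have hN := one_le_pnorm P.1
    calc ((pnorm P.1 + 1) * pnorm P.1)⁻¹ ≤ pnorm P.1 ^ (-1 : ℝ) / pnorm P.1 := by
          rw [Real.rpow_neg_one, mul_inv, div_eq_mul_inv]
          gcongr
          linarith
      _ ≤ pnorm P.1 ^ (-(1 / 2) : ℝ) / pnorm P.1 := by
          gcongr
          norm_num
  have hsum := (summable_rpow_neg_half_div_pnorm hs).of_nonneg_of_le
    (fun P ↦ by rw [pnorm]; positivity) hle
  simpa [sub_eq_add_neg] using Real.multipliable_one_add_of_summable hsum.neg

theorem tprod_one_add_eulerA1FactorSubOne_zero (hs : ∀ P, p P → P.Monic) :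
    ∏' P : {P // p P}, (1 + eulerA1FactorSubOne P.1 0) =
      ((∏' P : {P // p P}, (1 - ((pnorm P.1 + 1) * pnorm P.1)⁻¹) : ℝ) : ℂ) := by
  have := (multipliable_one_sub_inv_pnorm hs).map_tprod ofRealHom continuous_ofReal
  rw [ofRealHom_eq_coe] at this
  rw [this]
  exact tprod_congr fun P ↦ one_add_eulerA1FactorSubOne_zero P.1

theorem hasSum_logDeriv_one_add_eulerA1FactorSubOne_zero (hs : ∀ P, p P → P.Monic) :
    HasSum (fun P : {P // p P} ↦ logDeriv (fun w ↦ 1 + eulerA1FactorSubOne P.1 w) 0)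
      ((2 * Real.log (Fintype.card Fq) *
        ∑' P : {P // p P}, (P.1.natDegree : ℝ) / (pnorm P.1 * (pnorm P.1 + 1) - 1) : ℝ) : ℂ) := by
  simp_rw [logDeriv_one_add_eulerA1FactorSubOne_zero]
  exact hasSum_ofReal.mpr ((summable_natDegree_div_pnorm hs).hasSum.mul_left _)

end MonicSums

theorem stmt_8_general {Fq : Type*} [Field Fq] [Fintype Fq] :
    Summable (fun P : {P : Polynomial Fq // P.Monic ∧ Irreducible P} =>
      (P.1.natDegree : ℝ) / (pnorm P.1 * (pnorm P.1 + 1) - 1)) ∧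
    HasDerivAt (eulerA1 Fq)
      ((( ∏' P : {P : Polynomial Fq // P.Monic ∧ Irreducible P},
            (1 - ((pnorm P.1 + 1) * pnorm P.1)⁻¹)) *
          (2 * Real.log (Fintype.card Fq)) *
          ∑' P : {P : Polynomial Fq // P.Monic ∧ Irreducible P},
            (P.1.natDegree : ℝ) / (pnorm P.1 * (pnorm P.1 + 1) - 1) : ℝ) : ℂ)
      0 := by
  have hs (P : Fq[X]) (hP : P.Monic ∧ Irreducible P) : P.Monic := hP.1
  let U : Set ℂ := {z | -(1 / 4) < z.re}
  have hU : IsOpen U := isOpen_lt continuous_const continuous_re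
  have h0U : (0 : ℂ) ∈ U := by norm_num [U]
  have hprod := hasDerivAt_tprod_one_add
    (f := fun P : {P // P.Monic ∧ Irreducible P} ↦ eulerA1FactorSubOne P.1) hU
    (summable_rpow_neg_half_div_pnorm hs)
    (fun P z hz ↦ norm_eulerA1FactorSubOne_le P.1 hz.le)
    (fun P ↦ (differentiable_eulerA1FactorSubOne P.1).differentiableOn)
    (fun P z hz ↦ one_add_eulerA1FactorSubOne_ne_zero P.1 (by linarith [hz.out]))
    h0U (hasSum_logDeriv_one_add_eulerA1FactorSubOne_zero hs)
  have heq : eulerA1 Fq =ᶠ[nhds 0]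
      fun z ↦ ∏' P : {P // P.Monic ∧ Irreducible P}, (1 + eulerA1FactorSubOne P.1 z) :=
    Filter.eventually_of_mem (hU.mem_nhds h0U) fun z hz ↦ tprod_congr fun P ↦
      eulerA1_factor_eq P.2.2.natDegree_pos.ne' (by linarith [hz.out])
  refine ⟨summable_natDegree_div_pnorm hs, ?_⟩
  rw [tprod_one_add_eulerA1FactorSubOne_zero hs] at hprod
  refine (hprod.congr_of_eventuallyEq heq).congr_deriv ?_
  push_cast
  ring

/-- for `k = 1`, `z ↦ A(1/2;z)` is differentiable at `z = 0` with
`A'(1/2;0) = A(1/2;0)·(2 log q)·Σ_P deg(P)/(|P|(|P|+1)−1)`, where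
`A(1/2;0) = ∏_P (1 − 1/((|P|+1)|P|))` and the series converges absolutely. -/
theorem stmt_8 {Fq : Type*} [Field Fq] [Fintype Fq] (hq : Odd (Fintype.card Fq)) :
    Summable (fun P : {P : Polynomial Fq // P.Monic ∧ Irreducible P} =>
      (P.1.natDegree : ℝ) / (pnorm P.1 * (pnorm P.1 + 1) - 1)) ∧
    HasDerivAt (eulerA1 Fq)
      ((( ∏' P : {P : Polynomial Fq // P.Monic ∧ Irreducible P},
            (1 - ((pnorm P.1 + 1) * pnorm P.1)⁻¹)) *
          (2 * Real.log (Fintype.card Fq)) *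
          ∑' P : {P : Polynomial Fq // P.Monic ∧ Irreducible P},
            (P.1.natDegree : ℝ) / (pnorm P.1 * (pnorm P.1 + 1) - 1) : ℝ) : ℂ)
      0 :=
  stmt_8_general
end

section
/- Let K, Q ≥ 1, let α_1,…,α_K, γ_1,…,γ_Q ∈ ℂ have positive real parts, and let t > 1 be real. Define μ(c) = 1 if c = 0, μ(c) = −1 if c = 1, and μ(c) = 0 if c ≥ 2. Then 1 + (1 + 1/t)^{-1} · Σ_{(a,c) ∈ ℕ^K × ℕ^Q, 0 < Σ_k a_k + Σ_m c_m even} ( ∏_{m=1}^{Q} μ(c_m) ) · t^{ −( Σ_{k=1}^{K} a_k(1/2 + α_k) + Σ_{m=1}^{Q} c_m(1/2 + γ_m) ) } = (1 + 1/t)^{-1} · ( (1/2) · ∏_{m=1}^{Q}(1 − t^{-(1/2+γ_m)}) / ∏_{k=1}^{K}(1 − t^{-(1/2+α_k)}) + (1/2) · ∏_{m=1}^{Q}(1 + t^{-(1/2+γ_m)}) / ∏_{k=1}^{K}(1 + t^{-(1/2+α_k)}) + 1/t ), the sum on the left being absolutely convergent. -/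
/-!
Write `x_k = t^{-(1/2+α_k)}` and `y_m = t^{-(1/2+γ_m)}`. Summed over all of `ℕ^K × ℕ^Q`, the
terms form the Euler product `∏ (1 - y_m) / ∏ (1 - x_k)`: geometric series in each `a_k`
(`‖x_k‖ < 1`) times the finite series `Σ_c μ(c) y^c = 1 - y` in each `c_m`. Replacing `x, y` by
`-x, -y` multiplies each term by `(-1)^{Σa + Σc}`, so half the sum of the two products is the
sum over even total degree; removing the degree-zero term `1` leaves the series in question, and
`1 - (1 + 1/t)⁻¹ = (1 + 1/t)⁻¹ / t` turns this into the stated identity.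
-/

/-- `μ(P^c)`: the Möbius function of `F_q[x]` at a prime power, as a function of the
exponent `c`: `μ(P^0) = 1`, `μ(P^1) = −1`, `μ(P^c) = 0` for `c ≥ 2`. -/
def muExp (c : ℕ) : ℤ := if c = 0 then 1 else if c = 1 then -1 else 0

open Finset

section PiProduct

variable {R : Type*} [NormedCommRing R] {κ : Type*}

theorem summable_norm_prod_pi {n : ℕ} {g : Fin n → κ → R}
    (hg : ∀ i, Summable fun c => ‖g i c‖) :
    Summable fun a : Fin n → κ => ‖∏ i, g i (a i)‖ := by
  induction n with
  | zero => exact .of_finite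
  | succ n ih =>
    rw [← (Fin.consEquiv fun _ => κ).summable_iff]
    simpa [Function.comp_def, Fin.prod_univ_succ] using
      (hg 0).mul_norm (ih fun i => hg i.succ)

theorem hasSum_prod_pi [CompleteSpace R] {n : ℕ} {g : Fin n → κ → R}
    (hg : ∀ i, Summable fun c => ‖g i c‖) :
    HasSum (fun a : Fin n → κ => ∏ i, g i (a i)) (∏ i, ∑' c, g i c) := by
  induction n with
  | zero => simp
  | succ n ih =>
    rw [← (Fin.consEquiv fun _ => κ).hasSum_iff, Fin.prod_univ_succ,
      ← (ih fun i => hg i.succ).tsum_eq,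
      tsum_mul_tsum_of_summable_norm (hg 0) (summable_norm_prod_pi fun i => hg i.succ)]
    simpa [Function.comp_def, Fin.prod_univ_succ] using
      (summable_mul_of_summable_norm (hg 0) (summable_norm_prod_pi fun i => hg i.succ)).hasSum

end PiProduct

theorem muExp_eq_zero {c : ℕ} (hc : c ∉ ({0, 1} : Finset ℕ)) : muExp c = 0 := by
  simp only [mem_insert, mem_singleton, not_or] at hc
  simp [muExp, hc.1, hc.2]

section EulerFactor

variable {𝕜 : Type*} [NormedField 𝕜]

theorem hasSum_muExp_mul_pow (y : 𝕜) : HasSum (fun c => (muExp c : 𝕜) * y ^ c) (1 - y) := by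
  have : HasSum (fun c => (muExp c : 𝕜) * y ^ c) (∑ c ∈ {0, 1}, (muExp c : 𝕜) * y ^ c) :=
    hasSum_sum_of_ne_finset_zero fun c hc => by simp [muExp_eq_zero hc]
  simpa [muExp, sub_eq_add_neg] using this

theorem summable_norm_muExp_mul_pow (y : 𝕜) : Summable fun c => ‖(muExp c : 𝕜) * y ^ c‖ :=
  summable_of_ne_finset_zero (s := {0, 1}) fun c hc => by simp [muExp_eq_zero hc]

variable {m n : ℕ}

def eulerTerm (x : Fin m → 𝕜) (y : Fin n → 𝕜) (p : (Fin m → ℕ) × (Fin n → ℕ)) : 𝕜 :=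
  (∏ i, x i ^ p.1 i) * ∏ j, (muExp (p.2 j) : 𝕜) * y j ^ p.2 j

theorem eulerTerm_zero (x : Fin m → 𝕜) (y : Fin n → 𝕜) : eulerTerm x y 0 = 1 := by
  simp [eulerTerm, muExp]

theorem eulerTerm_neg (x : Fin m → 𝕜) (y : Fin n → 𝕜) (p : (Fin m → ℕ) × (Fin n → ℕ)) :
    eulerTerm (-x) (-y) p = (-1) ^ (∑ i, p.1 i + ∑ j, p.2 j) * eulerTerm x y p := by
  simp only [eulerTerm, Pi.neg_apply, neg_pow (x _), neg_pow (y _), pow_add,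
    ← prod_pow_eq_pow_sum, prod_mul_distrib]
  ring

theorem hasSum_eulerTerm [CompleteSpace 𝕜] {x : Fin m → 𝕜} (hx : ∀ i, ‖x i‖ < 1) (y : Fin n → 𝕜) :
    HasSum (eulerTerm x y) ((∏ j, (1 - y j)) / ∏ i, (1 - x i)) := by
  unfold eulerTerm
  have hgeom : ∀ i, Summable fun a => ‖x i ^ a‖ :=
    fun i => summable_norm_geometric_of_norm_lt_one (hx i)
  have hmu : ∀ j, Summable fun c => ‖(muExp c : 𝕜) * y j ^ c‖ :=
    fun j => summable_norm_muExp_mul_pow (y j)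
  have := (summable_mul_of_summable_norm (summable_norm_prod_pi hgeom)
    (summable_norm_prod_pi hmu)).hasSum
  rw [← tsum_mul_tsum_of_summable_norm (summable_norm_prod_pi hgeom)
    (summable_norm_prod_pi hmu), (hasSum_prod_pi hgeom).tsum_eq,
    (hasSum_prod_pi hmu).tsum_eq] at this
  simpa only [(hasSum_geometric_of_norm_lt_one (hx _)).tsum_eq,
    (hasSum_muExp_mul_pow (y _)).tsum_eq, prod_inv_distrib, div_eq_inv_mul] using this

end EulerFactor

theorem hasSum_subtype_pos_even {α 𝕜 : Type*} [Field 𝕜] [CharZero 𝕜] [TopologicalSpace 𝕜]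
    [IsTopologicalRing 𝕜] {G : α → 𝕜} {A B : 𝕜} (deg : α → ℕ) {p₀ : α}
    (hdeg : ∀ p, deg p = 0 ↔ p = p₀) (hA : HasSum G A)
    (hB : HasSum (fun p => (-1) ^ deg p * G p) B) :
    HasSum (fun p : {p // 0 < deg p ∧ Even (deg p)} => G p) ((A + B) / 2 - G p₀) := by
  classical
  refine (hasSum_subtype_iff_indicator (s := {p | 0 < deg p ∧ Even (deg p)})).mpr <|
    (((hA.add hB).div_const 2).sub (hasSum_ite_eq p₀ (G p₀))).congr_fun fun p => ?_
  rcases eq_or_ne p p₀ with rfl | hp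
  · simp [(hdeg p).mpr rfl]
  · have hpos : 0 < deg p := Nat.pos_of_ne_zero fun h => hp ((hdeg p).mp h)
    rcases Nat.even_or_odd (deg p) with he | ho
    · rw [Set.indicator_of_mem (show p ∈ {p | 0 < deg p ∧ Even (deg p)} from ⟨hpos, he⟩),
        he.neg_one_pow, if_neg hp]
      ring
    · rw [Set.indicator_of_notMem fun h => Nat.not_even_iff_odd.mpr ho h.2,
        ho.neg_one_pow, if_neg hp]
      ring

theorem sum_add_sum_eq_zero_iff {ι κ : Type*} [Fintype ι] [Fintype κ]
    (p : (ι → ℕ) × (κ → ℕ)) : ∑ i, p.1 i + ∑ j, p.2 j = 0 ↔ p = 0 := by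
  simp [Prod.ext_iff, funext_iff, sum_eq_zero_iff]

theorem norm_exp_neg_mul_lt_one {z : ℂ} {L : ℝ} (hz : 0 < z.re) (hL : 0 < L) :
    ‖Complex.exp (-z * L)‖ < 1 := by
  rw [Complex.norm_exp, Real.exp_lt_one_iff]
  simpa using mul_pos hz hL

theorem muExp_prod_mul_exp_eq_eulerTerm {m n : ℕ} (a : Fin m → ℂ) (b : Fin n → ℂ) (L : ℂ)
    (p : (Fin m → ℕ) × (Fin n → ℕ)) :
    ((∏ j, muExp (p.2 j) : ℤ) : ℂ) *
        Complex.exp (-(∑ i, (p.1 i : ℂ) * a i + ∑ j, (p.2 j : ℂ) * b j) * L) =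
      eulerTerm (fun i => Complex.exp (-a i * L)) (fun j => Complex.exp (-b j * L)) p := by
  have hexp : ∀ {r : ℕ} (e : Fin r → ℕ) (w : Fin r → ℂ),
      Complex.exp (-(∑ i, (e i : ℂ) * w i) * L) = ∏ i, Complex.exp (-w i * L) ^ e i := by
    intro r e w
    simp only [← Complex.exp_nat_mul, ← Complex.exp_sum, neg_mul, mul_neg, sum_neg_distrib,
      sum_mul, mul_assoc]
  rw [neg_add, add_mul, Complex.exp_add, hexp, hexp, eulerTerm, prod_mul_distrib]
  push_cast
  ring

theorem stmt_15_general (K Q : ℕ)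
    (α : Fin K → ℂ) (γ : Fin Q → ℂ)
    (hα : ∀ k, 0 < (α k).re)
    (t : ℝ) (ht : 1 < t) :
    Summable (fun p : {p : (Fin K → ℕ) × (Fin Q → ℕ) //
        0 < (∑ k, p.1 k) + (∑ m, p.2 m) ∧ Even ((∑ k, p.1 k) + (∑ m, p.2 m))} =>
      ((∏ m, muExp (p.1.2 m) : ℤ) : ℂ) *
        Complex.exp (-(∑ k, (p.1.1 k : ℂ) * (1 / 2 + α k) +
            ∑ m, (p.1.2 m : ℂ) * (1 / 2 + γ m)) * Real.log t)) ∧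
    1 + (1 + (t : ℂ)⁻¹)⁻¹ *
      (∑' p : {p : (Fin K → ℕ) × (Fin Q → ℕ) //
          0 < (∑ k, p.1 k) + (∑ m, p.2 m) ∧ Even ((∑ k, p.1 k) + (∑ m, p.2 m))},
        ((∏ m, muExp (p.1.2 m) : ℤ) : ℂ) *
          Complex.exp (-(∑ k, (p.1.1 k : ℂ) * (1 / 2 + α k) +
              ∑ m, (p.1.2 m : ℂ) * (1 / 2 + γ m)) * Real.log t)) =
      (1 + (t : ℂ)⁻¹)⁻¹ *
        ((1 / 2) * (∏ m, (1 - Complex.exp (-(1 / 2 + γ m) * Real.log t))) /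
            (∏ k, (1 - Complex.exp (-(1 / 2 + α k) * Real.log t))) +
         (1 / 2) * (∏ m, (1 + Complex.exp (-(1 / 2 + γ m) * Real.log t))) /
            (∏ k, (1 + Complex.exp (-(1 / 2 + α k) * Real.log t))) +
         (t : ℂ)⁻¹) := by
  have hL : 0 < Real.log t := Real.log_pos ht
  set x : Fin K → ℂ := fun k => Complex.exp (-(1 / 2 + α k) * Real.log t)
  set y : Fin Q → ℂ := fun m => Complex.exp (-(1 / 2 + γ m) * Real.log t)
  have hx : ∀ k, ‖x k‖ < 1 := fun k =>
    norm_exp_neg_mul_lt_one (by simp; linarith [hα k]) hL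
  have hx' : ∀ k, ‖(-x) k‖ < 1 := fun k => by simpa using hx k
  have hterm := muExp_prod_mul_exp_eq_eulerTerm (fun k => 1 / 2 + α k) (fun m => 1 / 2 + γ m)
    (Real.log t)
  have hsum := hasSum_subtype_pos_even _ sum_add_sum_eq_zero_iff
    ((hasSum_eulerTerm hx y).congr_fun hterm)
    ((hasSum_eulerTerm hx' (-y)).congr_fun fun p => by rw [eulerTerm_neg, hterm])
  refine ⟨hsum.summable, ?_⟩
  rw [hsum.tsum_eq, hterm, eulerTerm_zero]
  have hu : 1 + (t : ℂ)⁻¹ ≠ 0 := by exact_mod_cast (by positivity : (0 : ℝ) < 1 + t⁻¹).ne'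
  have halg : ∀ P₁ Q₁ P₂ Q₂ : ℂ, 1 + (1 + (t : ℂ)⁻¹)⁻¹ * ((P₁ / Q₁ + P₂ / Q₂) / 2 - 1) =
      (1 + (t : ℂ)⁻¹)⁻¹ * (1 / 2 * P₁ / Q₁ + 1 / 2 * P₂ / Q₂ + (t : ℂ)⁻¹) := by
    intros
    linear_combination -inv_mul_cancel₀ hu
  simp only [Pi.neg_apply, sub_neg_eq_add]
  exact halg _ _ _ _

/-- local-factor identity.  For `t > 1` (playing the role of `|P|`) and
shifts `α`, `γ` with positive real parts,
`1 + (1+1/t)⁻¹ Σ_{0<Σa+Σc even} (∏ μ(c_m)) t^{−(Σ a_k(1/2+α_k)+Σ c_m(1/2+γ_m))}`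
equals `(1+1/t)⁻¹·((1/2)∏(1−t^{-(1/2+γ_m)})/∏(1−t^{-(1/2+α_k)})
+ (1/2)∏(1+t^{-(1/2+γ_m)})/∏(1+t^{-(1/2+α_k)}) + 1/t)`, the sum converging
absolutely; here `t^w = exp(w·log t)`. -/
theorem stmt_15 (K Q : ℕ) (hK : 1 ≤ K) (hQ : 1 ≤ Q)
    (α : Fin K → ℂ) (γ : Fin Q → ℂ)
    (hα : ∀ k, 0 < (α k).re) (hγ : ∀ m, 0 < (γ m).re)
    (t : ℝ) (ht : 1 < t) :
    Summable (fun p : {p : (Fin K → ℕ) × (Fin Q → ℕ) //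
        0 < (∑ k, p.1 k) + (∑ m, p.2 m) ∧ Even ((∑ k, p.1 k) + (∑ m, p.2 m))} =>
      ((∏ m, muExp (p.1.2 m) : ℤ) : ℂ) *
        Complex.exp (-(∑ k, (p.1.1 k : ℂ) * (1 / 2 + α k) +
            ∑ m, (p.1.2 m : ℂ) * (1 / 2 + γ m)) * Real.log t)) ∧
    1 + (1 + (t : ℂ)⁻¹)⁻¹ *
      (∑' p : {p : (Fin K → ℕ) × (Fin Q → ℕ) //
          0 < (∑ k, p.1 k) + (∑ m, p.2 m) ∧ Even ((∑ k, p.1 k) + (∑ m, p.2 m))},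
        ((∏ m, muExp (p.1.2 m) : ℤ) : ℂ) *
          Complex.exp (-(∑ k, (p.1.1 k : ℂ) * (1 / 2 + α k) +
              ∑ m, (p.1.2 m : ℂ) * (1 / 2 + γ m)) * Real.log t)) =
      (1 + (t : ℂ)⁻¹)⁻¹ *
        ((1 / 2) * (∏ m, (1 - Complex.exp (-(1 / 2 + γ m) * Real.log t))) /
            (∏ k, (1 - Complex.exp (-(1 / 2 + α k) * Real.log t))) +
         (1 / 2) * (∏ m, (1 + Complex.exp (-(1 / 2 + γ m) * Real.log t))) /
            (∏ k, (1 + Complex.exp (-(1 / 2 + α k) * Real.log t))) +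
         (t : ℂ)⁻¹) :=
  stmt_15_general K Q α γ hα t ht
end
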